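/- Let 0 < |λ| < 1 and consider the vector field G(x,ξ,η) = ((1/(s+1))(−λξ² + sη² − (λ+1)ξη), λxξ, xη) on ℝ³ with −1 < s < 0. On the half-space {η > 0}, the function f(x,ξ,η) = ξ·η^{−λ} is a first integral of G. -/

import Mathlib

/-! Along `G` the logarithmic derivatives satisfy `ξ'/ξ = λ x = λ η'/η`, so `ξ · η^{-λ}` is
conserved; the first component of `G` plays no role. -/

/-- The transformed geodesic field `F₅ₛ` of `Q₅ₛ` on `h(λ)` in coordinates `(x, ξ, η)`. -/
noncomputable def G5 (l s : ℝ) (v : Fin 3 → ℝ) : Fin 3 → ℝ :=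
  ![1 / (s + 1) * (-l * (v 1) ^ 2 + s * (v 2) ^ 2 - (l + 1) * v 1 * v 2),
    l * v 0 * v 1, v 0 * v 2]

theorem HasDerivAt.mul_rpow_neg_eq_zero {ξ η : ℝ → ℝ} {l a t : ℝ}
    (hξ : HasDerivAt ξ (l * a * ξ t) t) (hη : HasDerivAt η (a * η t) t) (hη₀ : η t ≠ 0) :
    HasDerivAt (fun u => ξ u * η u ^ (-l)) 0 t := by
  refine (hξ.mul (hη.rpow_const (p := -l) (Or.inl hη₀))).congr_deriv ?_
  have hpow : η t ^ (-l - 1) * η t = η t ^ (-l) := by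
    rw [← Real.rpow_add_one hη₀, sub_add_cancel]
  linear_combination (-(ξ t * a * l)) * hpow

theorem stmt_14_general (l s : ℝ)
    (γ : ℝ → Fin 3 → ℝ) (t : ℝ) (hη : 0 < γ t 2)
    (hγ : HasDerivAt γ (G5 l s (γ t)) t) :
    HasDerivAt (fun u => γ u 1 * (γ u 2) ^ (-l : ℝ)) 0 t := by
  have hcomp := hasDerivAt_pi.mp hγ
  exact (hcomp 1).mul_rpow_neg_eq_zero (hcomp 2) hη.ne'

/-- For `0 < |λ| < 1` and `−1 < s < 0`, on `{η > 0}` the function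
`f = ξ·η^{−λ}` is a first integral of `G`. -/
theorem stmt_14 (l s : ℝ) (h1 : 0 < |l|) (h2 : |l| < 1) (hs1 : -1 < s) (hs2 : s < 0)
    (γ : ℝ → Fin 3 → ℝ) (t : ℝ) (hη : 0 < γ t 2)
    (hγ : HasDerivAt γ (G5 l s (γ t)) t) :
    HasDerivAt (fun u => γ u 1 * (γ u 2) ^ (-l : ℝ)) 0 t :=
  stmt_14_general l s γ t hη hγ
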